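/- Let P = [[3,1,1,-3,-2,0],[2,2,1,-3,-2,0],[2,1,2,-3,-2,0],[0,0,0,0,0,0],[1,0,1,-1,-1,0],[1,1,1,-2,-1,0]] be a real 6×6 matrix and e₀ = (1,0,0,0,0,0)ᵗ. Then the sequence n ↦ |(Pⁿ·e₀)₀|^{1/n}, where (Pⁿ·e₀)₀ denotes the first coordinate (index 0) of Pⁿ·e₀, converges to 2 + √5 = ((1 + √5)/2)³ as n → ∞. -/

import Mathlib

/-!
The orbit of `e₀` under `P` is governed by the Fibonacci numbers: an induction shows
`Pⁿ e₀ = ½ (F₃ₙ₊₂ + 1, F₃ₙ₊₂ - 1, F₃ₙ₊₂ - 1, 0, F₃ₙ, F₃ₙ₊₁ - 1)`.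
By Binet's formula `F₃ₙ₊₂ ~ φ^(3n+2)/√5`, so the `n`-th root of the first coordinate tends to
`φ³ = 2 + √5`.
-/

open Filter Matrix Real Topology
open scoped goldenRatio

theorem goldenRatio_pow_three : φ ^ 3 = 2 + √5 := by
  have h5 : √5 ^ 2 = 5 := sq_sqrt (by norm_num)
  linear_combination (√5 + 3) / 8 * h5

theorem tendsto_fib_div_goldenRatio_pow :
    Tendsto (fun n ↦ (Nat.fib n : ℝ) / φ ^ n) atTop (𝓝 (1 / √5)) := by
  have hratio : Tendsto (fun n ↦ (ψ / φ) ^ n) atTop (𝓝 0) := by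
    apply tendsto_pow_atTop_nhds_zero_of_abs_lt_one
    rw [abs_div, div_lt_one (by positivity), abs_of_pos goldenRatio_pos, abs_lt]
    constructor <;> linarith [neg_one_lt_goldenConj, goldenConj_neg, one_lt_goldenRatio]
  have hbinet (n : ℕ) : (Nat.fib n : ℝ) / φ ^ n = (1 - (ψ / φ) ^ n) / √5 := by
    rw [coe_fib_eq, div_right_comm, sub_div, div_self (pow_ne_zero n goldenRatio_ne_zero),
      ← div_pow]
  simpa [funext hbinet] using (hratio.const_sub 1).div_const √5

theorem tendsto_abs_rpow_one_div_of_tendsto_div_pow {u : ℕ → ℝ} {α L : ℝ} (hα : 0 < α)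
    (hL : L ≠ 0) (hu : Tendsto (fun n ↦ u n / α ^ n) atTop (𝓝 L)) :
    Tendsto (fun n : ℕ ↦ |u n| ^ ((1 : ℝ) / n)) atTop (𝓝 α) := by
  have hroot : Tendsto (fun n : ℕ ↦ |u n / α ^ n| ^ ((1 : ℝ) / n)) atTop (𝓝 1) := by
    simpa using hu.abs.rpow tendsto_one_div_atTop_nhds_zero_nat (Or.inl (abs_ne_zero.mpr hL))
  refine (mul_one α ▸ hroot.const_mul α).congr' ?_
  filter_upwards [eventually_ne_atTop 0] with n hn
  have hαn : 0 < α ^ n := pow_pos hα n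
  rw [abs_div, abs_of_pos hαn, div_rpow (abs_nonneg _) hαn.le, ← rpow_natCast,
    ← rpow_mul hα.le, mul_one_div_cancel (by exact_mod_cast hn), rpow_one,
    mul_div_cancel₀ _ hα.ne']

/-- The product `P₂·P₁·P₀` of the three transition matrices. -/
def triangleMatrix : Matrix (Fin 6) (Fin 6) ℝ :=
  !![3, 1, 1, -3, -2, 0;
     2, 2, 1, -3, -2, 0;
     2, 1, 2, -3, -2, 0;
     0, 0, 0,  0,  0, 0;
     1, 0, 1, -1, -1, 0;
     1, 1, 1, -2, -1, 0]

theorem triangleMatrix_pow_mulVec (n : ℕ) :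
    (triangleMatrix ^ n) *ᵥ ![1, 0, 0, 0, 0, 0] =
      ![((Nat.fib (3 * n + 2) : ℝ) + 1) / 2, ((Nat.fib (3 * n + 2) : ℝ) - 1) / 2,
        ((Nat.fib (3 * n + 2) : ℝ) - 1) / 2, 0, (Nat.fib (3 * n) : ℝ) / 2,
        ((Nat.fib (3 * n + 1) : ℝ) - 1) / 2] := by
  induction n with
  | zero =>
    ext i; fin_cases i <;> norm_num
  | succ n ih =>
    have h2 : (Nat.fib (3 * n + 2) : ℝ) = Nat.fib (3 * n) + Nat.fib (3 * n + 1) := by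
      exact_mod_cast Nat.fib_add_two
    have h3 : (Nat.fib (3 * n + 3) : ℝ) = Nat.fib (3 * n + 1) + Nat.fib (3 * n + 2) := by
      exact_mod_cast Nat.fib_add_two
    have h4 : (Nat.fib (3 * n + 3 + 1) : ℝ) = Nat.fib (3 * n + 2) + Nat.fib (3 * n + 3) := by
      exact_mod_cast Nat.fib_add_two
    have h5 : (Nat.fib (3 * n + 3 + 2) : ℝ) = Nat.fib (3 * n + 3) + Nat.fib (3 * n + 3 + 1) := by
      exact_mod_cast Nat.fib_add_two
    rw [pow_succ', ← mulVec_mulVec, ih, show 3 * (n + 1) = 3 * n + 3 by ring]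
    ext i; fin_cases i <;>
      simp [triangleMatrix, vecHead, vecTail] <;> linarith

theorem tendsto_triangleMatrix_pow_mulVec_zero_div_pow :
    Tendsto (fun n ↦ ((triangleMatrix ^ n) *ᵥ ![1, 0, 0, 0, 0, 0]) 0 / (φ ^ 3) ^ n) atTop
      (𝓝 (φ ^ 2 / (2 * √5))) := by
  have hfib : Tendsto (fun n ↦ (Nat.fib (3 * n + 2) : ℝ) / φ ^ (3 * n + 2)) atTop (𝓝 (1 / √5)) :=
    tendsto_fib_div_goldenRatio_pow.comp <|
      tendsto_atTop_mono (fun n ↦ show n ≤ 3 * n + 2 by omega) tendsto_id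
  have hgeom : Tendsto (fun n ↦ ((φ ^ 3)⁻¹) ^ n) atTop (𝓝 0) :=
    tendsto_pow_atTop_nhds_zero_of_lt_one (by positivity)
      (inv_lt_one_of_one_lt₀ (one_lt_pow₀ one_lt_goldenRatio (by norm_num)))
  have hsplit (n : ℕ) : ((triangleMatrix ^ n) *ᵥ ![1, 0, 0, 0, 0, 0]) 0 / (φ ^ 3) ^ n =
      φ ^ 2 / 2 * ((Nat.fib (3 * n + 2) : ℝ) / φ ^ (3 * n + 2)) + 1 / 2 * ((φ ^ 3)⁻¹) ^ n := by
    rw [triangleMatrix_pow_mulVec, cons_val_zero, ← pow_mul, pow_add, inv_pow, ← pow_mul]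
    field_simp [goldenRatio_ne_zero]
  rw [funext hsplit, show φ ^ 2 / (2 * √5) = φ ^ 2 / 2 * (1 / √5) + 1 / 2 * 0 by ring]
  exact (hfib.const_mul _).add (hgeom.const_mul _)

/-- The exponential growth rate of the first coordinate (index `0`) of `Pⁿ·e₀` for
`P = P₂·P₁·P₀` and `e₀ = (1,0,0,0,0,0)ᵗ` is the dominant eigenvalue
`2 + √5 = ((1 + √5)/2)³`. -/
theorem stmt_13 (P : Matrix (Fin 6) (Fin 6) ℝ)
    (hP : P = !![3, 1, 1, -3, -2, 0;
                 2, 2, 1, -3, -2, 0;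
                 2, 1, 2, -3, -2, 0;
                 0, 0, 0,  0,  0, 0;
                 1, 0, 1, -1, -1, 0;
                 1, 1, 1, -2, -1, 0])
    (e0 : Fin 6 → ℝ) (he0 : e0 = ![1, 0, 0, 0, 0, 0]) :
    Tendsto (fun n : ℕ => |((P ^ n).mulVec e0) 0| ^ ((1 : ℝ) / n))
      atTop (nhds (2 + Real.sqrt 5)) ∧
      2 + Real.sqrt 5 = ((1 + Real.sqrt 5) / 2) ^ 3 := by
  have hP' : P = triangleMatrix := hP
  subst hP' he0
  refine ⟨?_, goldenRatio_pow_three.symm⟩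
  rw [← goldenRatio_pow_three]
  exact tendsto_abs_rpow_one_div_of_tendsto_div_pow (by positivity) (by positivity)
    tendsto_triangleMatrix_pow_mulVec_zero_div_pow
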